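/- arXiv:1211.1061 — 2 statements merged into one kernel-verified Lean document; each statement's English description precedes it below -/
import Mathlib

section
/- Let Ω be a hyperconvex domain in ℂⁿ with the property that whenever u is plurisubharmonic on Ω and upper semicontinuous on Ω̄ and there exists v ∈ PSH(Ω̄) with u = v on ∂Ω, then u ∈ PSH(Ω̄). Then Ω is P-hyperconvex. -/
open MeasureTheory Metric Set Filter

noncomputable section

/-- The positive part of an extended real number, as an element of `ℝ≥0∞`. -/
def erealPos (x : EReal) : ENNReal := if x = ⊤ then ⊤ else ENNReal.ofReal x.toReal

/-- The integral of an extended-real-valued function `u` against a measure `μ`,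
defined as the difference of the (unsigned) lower integrals of the positive and
negative parts of `u`. -/
def erealIntegral {α : Type*} [MeasurableSpace α] (μ : Measure α) (u : α → EReal) : EReal :=
  ((∫⁻ a, erealPos (u a) ∂μ : ENNReal) : EReal) - ((∫⁻ a, erealPos (-(u a)) ∂μ : ENNReal) : EReal)

/-- The normalized "angle" measure on `(0, 2π]`, used to express averages over circles. -/
def circleAngleMeasure : Measure ℝ :=
  (ENNReal.ofReal (2 * Real.pi))⁻¹ • volume.restrict (Set.Ioc 0 (2 * Real.pi))

/-- A function `u` with values in `[-∞, ∞)` is plurisubharmonic on an open set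
`U ⊆ ℂⁿ` if it is upper semicontinuous on `U`, takes no value `+∞` on `U`, and
satisfies the sub-mean-value inequality on every closed disc of every complex line
contained in `U`. -/
def PshOn {n : ℕ} (u : (Fin n → ℂ) → EReal) (U : Set (Fin n → ℂ)) : Prop :=
  UpperSemicontinuousOn u U ∧ (∀ z ∈ U, u z ≠ ⊤) ∧
  ∀ (a b : Fin n → ℂ) (r : ℝ), 0 < r →
    (∀ w : ℂ, ‖w‖ ≤ r → a + w • b ∈ U) →
    u a ≤ erealIntegral circleAngleMeasure
      (fun θ : ℝ => u (a + ((r : ℝ) * Complex.exp (θ * Complex.I)) • b))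

/-- `u : ℂⁿ → ℝ` belongs to `PSH°(X)` (for `X` compact) if there is an open
neighborhood `U ⊇ X` and a continuous plurisubharmonic function `v` on `U`
with `v = u` on `X`. -/
def PshO {n : ℕ} (u : (Fin n → ℂ) → ℝ) (X : Set (Fin n → ℂ)) : Prop :=
  ∃ U : Set (Fin n → ℂ), IsOpen U ∧ X ⊆ U ∧
    ∃ v : (Fin n → ℂ) → ℝ, ContinuousOn v U ∧ PshOn (fun z => (v z : EReal)) U ∧
      ∀ z ∈ X, u z = v z

/-- The Jensen measures at `z` with respect to the compact set `X`: Borel probability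
measures supported in `X` such that `u z ≤ ∫ u dμ` for all `u ∈ PSH°(X)`. -/
def JensenMeasures {n : ℕ} (X : Set (Fin n → ℂ)) (z : Fin n → ℂ) :
    Set (Measure (Fin n → ℂ)) :=
  {μ | IsProbabilityMeasure μ ∧ μ Xᶜ = 0 ∧
    ∀ u : (Fin n → ℂ) → ℝ, PshO u X → u z ≤ ∫ x, u x ∂μ}

/-- An upper semicontinuous function `u : X → [-∞, ∞)` is plurisubharmonic on the
compact set `X` if `u z ≤ ∫ u dμ` for every `z ∈ X` and every Jensen measure
`μ ∈ J_z(X)`. -/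
def PshCompact {n : ℕ} (u : (Fin n → ℂ) → EReal) (X : Set (Fin n → ℂ)) : Prop :=
  UpperSemicontinuousOn u X ∧ (∀ z ∈ X, u z ≠ ⊤) ∧
  ∀ z ∈ X, ∀ μ ∈ JensenMeasures X z, u z ≤ erealIntegral μ u

/-- A (bounded) domain: a bounded, connected, open subset of `ℂⁿ`. -/
def IsBoundedDomain {n : ℕ} (Ω : Set (Fin n → ℂ)) : Prop :=
  IsOpen Ω ∧ IsConnected Ω ∧ Bornology.IsBounded Ω

/-- The defining property of P-hyperconvexity: a non-constant function
`φ ∈ PSH(Ω̄) ∩ C(Ω̄)` vanishing on `∂Ω`. -/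
def PHxExhaustion {n : ℕ} (Ω : Set (Fin n → ℂ)) : Prop :=
  ∃ φ : (Fin n → ℂ) → ℝ,
    PshCompact (fun z => (φ z : EReal)) (closure Ω) ∧ ContinuousOn φ (closure Ω) ∧
    (∃ z ∈ closure Ω, ∃ w ∈ closure Ω, φ z ≠ φ w) ∧
    ∀ z ∈ frontier Ω, φ z = 0

/-- A bounded domain `Ω ⊂ ℂⁿ` is P-hyperconvex if there is a non-constant
`φ ∈ PSH(Ω̄) ∩ C(Ω̄)` with `φ = 0` on `∂Ω`. -/
def IsPHyperconvex {n : ℕ} (Ω : Set (Fin n → ℂ)) : Prop :=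
  IsBoundedDomain Ω ∧ PHxExhaustion Ω

/-- A bounded domain `Ω ⊂ ℂⁿ` is hyperconvex if there is a non-constant
`φ ∈ PSH(Ω) ∩ C(Ω̄)` with `φ = 0` on `∂Ω`. -/
def IsHyperconvex {n : ℕ} (Ω : Set (Fin n → ℂ)) : Prop :=
  IsBoundedDomain Ω ∧
  ∃ φ : (Fin n → ℂ) → ℝ,
    PshOn (fun z => (φ z : EReal)) Ω ∧ ContinuousOn φ (closure Ω) ∧
    (∃ z ∈ closure Ω, ∃ w ∈ closure Ω, φ z ≠ φ w) ∧
    ∀ z ∈ frontier Ω, φ z = 0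

end

theorem erealIntegral_const {α : Type*} [MeasurableSpace α] (μ : Measure α)
    [IsProbabilityMeasure μ] (c : ℝ) : erealIntegral μ (fun _ => (c : EReal)) = c := by
  simp only [erealIntegral, erealPos, lintegral_const, measure_univ, mul_one,
    EReal.coe_ne_top, ← EReal.coe_neg, if_false, EReal.toReal_coe]
  rw [EReal.coe_ennreal_ofReal, EReal.coe_ennreal_ofReal, ← EReal.coe_sub,
    max_zero_sub_max_neg_zero_eq_self]

theorem pshCompact_const {n : ℕ} (X : Set (Fin n → ℂ)) (c : ℝ) :
    PshCompact (fun _ => (c : EReal)) X := by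
  refine ⟨upperSemicontinuousOn_const, fun _ _ => EReal.coe_ne_top c, ?_⟩
  rintro z - μ ⟨hμ, -, -⟩
  rw [erealIntegral_const]

/-- A hyperconvex domain for which the conclusion of Theorem C holds is P-hyperconvex. -/
theorem phyperconvex_of_boundary_determination {n : ℕ} (Ω : Set (Fin n → ℂ))
    (hΩ : IsHyperconvex Ω)
    (hprop : ∀ u : (Fin n → ℂ) → EReal, PshOn u Ω →
      UpperSemicontinuousOn u (closure Ω) → (∀ z ∈ closure Ω, u z ≠ ⊤) →
      ∀ v : (Fin n → ℂ) → EReal, PshCompact v (closure Ω) →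
      (∀ z ∈ frontier Ω, u z = v z) → PshCompact u (closure Ω)) :
    IsPHyperconvex Ω := by
  obtain ⟨hdom, φ, hpsh, hcont, hnonconst, hzero⟩ := hΩ
  have husc : UpperSemicontinuousOn (fun z => (φ z : EReal)) (closure Ω) :=
    (continuous_coe_real_ereal.comp_continuousOn hcont).upperSemicontinuousOn
  -- The exhaustion agrees on `∂Ω` with `0 ∈ PSH(Ω̄)`, so it lies in `PSH(Ω̄)` itself.
  have hφ : PshCompact (fun z => (φ z : EReal)) (closure Ω) :=
    hprop _ hpsh husc (fun z _ => EReal.coe_ne_top _) _ (pshCompact_const _ 0)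
      (fun z hz => by rw [hzero z hz])
  exact ⟨hdom, φ, hφ, hcont, hnonconst, hzero⟩
end

section
/- Every P-hyperconvex domain Ω ⊂ ℂⁿ is fat, i.e., Ω equals the interior of its closure: Ω = (Ω̄)°. -/
open MeasureTheory Metric Set Filter

/-! Circle averages in complex lines are Jensen measures, so a continuous `φ ∈ PSH(Ω̄)` satisfies
the sub-mean value inequality on every disc in `Ω̄`, hence the strong maximum principle on the
connected open set `int(Ω̄)`. A point `z₀ ∈ int(Ω̄) \ Ω` lies on `∂Ω`, so `φ z₀ = 0`. The maximum
of `φ` over `Ω̄` is attained in `Ω` or on `∂Ω`, where `φ = 0 = φ z₀`; either way it is attained in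
`int(Ω̄)`, which forces the non-constant `φ` to be constant. -/

open Topology

lemma erealIntegral_coe {α : Type*} [MeasurableSpace α] {μ : Measure α} {f : α → ℝ}
    (hf : Integrable f μ) :
    erealIntegral μ (fun a => (f a : EReal)) = ((∫ a, f a ∂μ : ℝ) : EReal) := by
  have hcoe : ∀ x : ℝ, erealPos x = ENNReal.ofReal x := fun x => by simp [erealPos]
  have hneg : ∫⁻ a, ENNReal.ofReal (-f a) ∂μ ≠ ⊤ := hf.neg.lintegral_lt_top.ne
  simp only [erealIntegral, ← EReal.coe_neg, hcoe]
  rw [integral_eq_lintegral_pos_part_sub_lintegral_neg_part hf, EReal.coe_sub,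
    EReal.coe_ennreal_toReal hf.lintegral_lt_top.ne, EReal.coe_ennreal_toReal hneg]

instance : IsProbabilityMeasure circleAngleMeasure := by
  constructor
  have h2pi : ENNReal.ofReal (2 * Real.pi) ≠ 0 := by simp [Real.pi_pos]
  simpa [circleAngleMeasure, Real.pi_pos.le] using ENNReal.inv_mul_cancel h2pi ENNReal.ofReal_ne_top

lemma Continuous.integrable_circleAngleMeasure {g : ℝ → ℝ} (hg : Continuous g) :
    Integrable g circleAngleMeasure :=
  hg.integrableOn_Ioc.smul_measure (ENNReal.inv_ne_top.mpr (by simp [Real.pi_pos]))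

lemma Continuous.eqOn_Ioo_of_le_integral_circleAngleMeasure {g : ℝ → ℝ} {c : ℝ}
    (hg : Continuous g) (hle : ∀ θ, g θ ≤ c) (hc : c ≤ ∫ θ, g θ ∂circleAngleMeasure) :
    EqOn g (fun _ => c) (Ioo 0 (2 * Real.pi)) := by
  have hint : ∫ θ, c - g θ ∂circleAngleMeasure = 0 := by
    refine le_antisymm ?_ (integral_nonneg fun θ => sub_nonneg.mpr (hle θ))
    rw [integral_sub (integrable_const c) hg.integrable_circleAngleMeasure]
    simpa using hc
  have hae : (fun θ => c - g θ) =ᵐ[circleAngleMeasure] 0 :=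
    (integral_eq_zero_iff_of_nonneg (fun θ => sub_nonneg.mpr (hle θ))
      (continuous_const.sub hg).integrable_circleAngleMeasure).mp hint
  have h2pi : (ENNReal.ofReal (2 * Real.pi))⁻¹ ≠ 0 := ENNReal.inv_ne_zero.mpr ENNReal.ofReal_ne_top
  rw [circleAngleMeasure, EventuallyEq, Measure.ae_ennreal_smul_measure_iff h2pi] at hae
  have hIoo := Measure.eqOn_open_of_ae_eq (ae_restrict_of_ae_restrict_of_subset
    Ioo_subset_Ioc_self hae) isOpen_Ioo (continuous_const.sub hg).continuousOn
    continuousOn_const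
  exact fun θ hθ => (sub_eq_zero.mp (hIoo hθ)).symm

section LineCircle

variable {n : ℕ}

noncomputable def lineCircleMap (a b : Fin n → ℂ) (r θ : ℝ) : Fin n → ℂ :=
  a + ((r : ℂ) * Complex.exp (θ * Complex.I)) • b

@[fun_prop]
lemma continuous_lineCircleMap (a b : Fin n → ℂ) (r : ℝ) : Continuous (lineCircleMap a b r) := by
  unfold lineCircleMap
  fun_prop

lemma lineCircleMap_mem {X : Set (Fin n → ℂ)} {a b : Fin n → ℂ} {r : ℝ} (hr : 0 ≤ r)
    (hdisc : ∀ w : ℂ, ‖w‖ ≤ r → a + w • b ∈ X) (θ : ℝ) : lineCircleMap a b r θ ∈ X :=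
  hdisc _ (by simp [Complex.norm_exp_ofReal_mul_I, abs_of_nonneg hr])

lemma lineCircleMap_one_pi (a b : Fin n → ℂ) : lineCircleMap a b 1 Real.pi = a - b := by
  simp [lineCircleMap, sub_eq_add_neg]

lemma map_lineCircleMap_compl_eq_zero {X : Set (Fin n → ℂ)} (hX : IsClosed X)
    {a b : Fin n → ℂ} {r : ℝ} (hγ : ∀ θ, lineCircleMap a b r θ ∈ X) :
    circleAngleMeasure.map (lineCircleMap a b r) Xᶜ = 0 := by
  rw [Measure.map_apply (continuous_lineCircleMap a b r).measurable hX.measurableSet.compl]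
  simp [preimage_compl, show lineCircleMap a b r ⁻¹' X = univ from eq_univ_of_forall hγ]

lemma ContinuousOn.integral_map_lineCircleMap {X : Set (Fin n → ℂ)} (hX : IsClosed X)
    {a b : Fin n → ℂ} {r : ℝ} (hγ : ∀ θ, lineCircleMap a b r θ ∈ X) {f : (Fin n → ℂ) → ℝ}
    (hf : ContinuousOn f X) :
    ∫ x, f x ∂circleAngleMeasure.map (lineCircleMap a b r) =
      ∫ θ, f (lineCircleMap a b r θ) ∂circleAngleMeasure := by
  refine integral_map (continuous_lineCircleMap a b r).aemeasurable ?_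
  rw [← Measure.restrict_eq_self_of_ae_mem (ae_iff.mpr (map_lineCircleMap_compl_eq_zero hX hγ))]
  exact hf.aestronglyMeasurable hX.measurableSet

lemma map_lineCircleMap_mem_jensenMeasures {X : Set (Fin n → ℂ)} (hX : IsClosed X)
    {a b : Fin n → ℂ} {r : ℝ} (hr : 0 < r) (hdisc : ∀ w : ℂ, ‖w‖ ≤ r → a + w • b ∈ X) :
    circleAngleMeasure.map (lineCircleMap a b r) ∈ JensenMeasures X a := by
  have hγ := lineCircleMap_mem hr.le hdisc
  refine ⟨Measure.isProbabilityMeasure_map (continuous_lineCircleMap a b r).aemeasurable,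
    map_lineCircleMap_compl_eq_zero hX hγ, fun u ⟨U, _, hXU, v, hvc, hv, huv⟩ => ?_⟩
  have huc : ContinuousOn u X := (hvc.mono hXU).congr huv
  have hvγ : Continuous fun θ => v (lineCircleMap a b r θ) :=
    hvc.comp_continuous (continuous_lineCircleMap a b r) fun θ => hXU (hγ θ)
  have hsub : (v a : EReal) ≤ erealIntegral circleAngleMeasure
      (fun θ => (v (lineCircleMap a b r θ) : EReal)) := hv.2.2 a b r hr fun w hw => hXU (hdisc w hw)
  rw [erealIntegral_coe hvγ.integrable_circleAngleMeasure, EReal.coe_le_coe_iff] at hsub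
  rw [huc.integral_map_lineCircleMap hX hγ, huv a (by simpa using hdisc 0 (by simpa using hr.le))]
  simpa only [huv _ (hγ _)] using hsub

lemma PshCompact.le_integral_lineCircleMap {X : Set (Fin n → ℂ)} (hX : IsCompact X)
    {φ : (Fin n → ℂ) → ℝ} (hφ : PshCompact (fun z => (φ z : EReal)) X) (hc : ContinuousOn φ X)
    {a b : Fin n → ℂ} {r : ℝ} (hr : 0 < r) (hdisc : ∀ w : ℂ, ‖w‖ ≤ r → a + w • b ∈ X) :
    φ a ≤ ∫ θ, φ (lineCircleMap a b r θ) ∂circleAngleMeasure := by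
  have hμ := map_lineCircleMap_mem_jensenMeasures hX.isClosed hr hdisc
  have := hμ.1
  have hint : Integrable φ (circleAngleMeasure.map (lineCircleMap a b r)) := by
    rw [← Measure.restrict_eq_self_of_ae_mem (ae_iff.mpr hμ.2.1)]
    exact hc.integrableOn_compact hX
  have hsub := hφ.2.2 a (by simpa using hdisc 0 (by simpa using hr.le)) _ hμ
  rwa [erealIntegral_coe hint, EReal.coe_le_coe_iff,
    hc.integral_map_lineCircleMap hX.isClosed (lineCircleMap_mem hr.le hdisc)] at hsub

lemma PshCompact.eventually_eq_of_isMaxOn {X : Set (Fin n → ℂ)} (hX : IsCompact X)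
    {φ : (Fin n → ℂ) → ℝ} (hφ : PshCompact (fun z => (φ z : EReal)) X) (hc : ContinuousOn φ X)
    {z : Fin n → ℂ} (hz : z ∈ interior X) (hmax : IsMaxOn φ X z) : ∀ᶠ w in 𝓝 z, φ w = φ z := by
  obtain ⟨ε, hε, hball⟩ := Metric.mem_nhds_iff.mp (mem_interior_iff_mem_nhds.mp hz)
  filter_upwards [ball_mem_nhds z hε] with w hw
  have hdisc : ∀ t : ℂ, ‖t‖ ≤ 1 → z + t • (z - w) ∈ X := fun t ht => hball <| by
    rw [mem_ball, dist_eq_norm, add_sub_cancel_left, norm_smul, ← dist_eq_norm']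
    exact lt_of_le_of_lt (mul_le_of_le_one_left dist_nonneg ht) hw
  have hγ := lineCircleMap_mem zero_le_one hdisc
  -- the circle of radius `1` in direction `z - w` passes through `w` at `θ = π`
  have hconst := Continuous.eqOn_Ioo_of_le_integral_circleAngleMeasure
    (hc.comp_continuous (continuous_lineCircleMap _ _ _) hγ)
    (fun θ => isMaxOn_iff.mp hmax _ (hγ θ)) (hφ.le_integral_lineCircleMap hX hc one_pos hdisc)
  simpa [lineCircleMap_one_pi] using hconst ⟨Real.pi_pos, by linarith [Real.pi_pos]⟩

theorem PshCompact.eqOn_of_isMaxOn {X D : Set (Fin n → ℂ)} (hX : IsCompact X)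
    {φ : (Fin n → ℂ) → ℝ} (hφ : PshCompact (fun z => (φ z : EReal)) X) (hc : ContinuousOn φ X)
    (hDo : IsOpen D) (hD : IsPreconnected D) (hDX : D ⊆ X) (hXD : X ⊆ closure D)
    {a : Fin n → ℂ} (ha : a ∈ D) (hmax : IsMaxOn φ X a) : EqOn φ (fun _ => φ a) X := by
  have hmaxD : D ⊆ {z | φ z = φ a} := by
    have hu : IsOpen (D ∩ {z | φ z = φ a}) := by
      refine isOpen_iff_mem_nhds.mpr fun z ⟨hzD, (hz : φ z = φ a)⟩ =>
        inter_mem (hDo.mem_nhds hzD) ?_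
      have hzmax : IsMaxOn φ X z :=
        isMaxOn_iff.mpr fun y hy => (isMaxOn_iff.mp hmax y hy).trans_eq hz.symm
      exact (hφ.eventually_eq_of_isMaxOn hX hc (interior_maximal hDX hDo hzD) hzmax).mono
        fun w hw => hw.trans hz
    have hv : IsOpen (D ∩ φ ⁻¹' {φ a}ᶜ) :=
      (hc.mono hDX).isOpen_inter_preimage hDo isOpen_compl_singleton
    refine (hD.subset_left_of_subset_union hu hv ?_ ?_ ⟨a, ha, ha, rfl⟩).trans inter_subset_right
    · exact disjoint_left.mpr fun z hz hz' => hz'.2 hz.2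
    · exact fun z hz => (em (φ z = φ a)).imp (⟨hz, ·⟩) (⟨hz, ·⟩)
  exact EqOn.of_subset_closure (fun z hz => hmaxD hz) hc continuousOn_const hDX hXD

end LineCircle

/-- Every P-hyperconvex domain is fat. -/
theorem phyperconvex_fat {n : ℕ} (Ω : Set (Fin n → ℂ)) (hP : IsPHyperconvex Ω) :
    Ω = interior (closure Ω) := by
  obtain ⟨⟨hΩo, hΩconn, hΩbd⟩, φ, hφ, hc, ⟨z, hz, w, hw, hzw⟩, hfr⟩ := hP
  have hK : IsCompact (closure Ω) := hΩbd.isCompact_closure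
  have hΩD : Ω ⊆ interior (closure Ω) := interior_maximal subset_closure hΩo
  refine hΩD.antisymm fun z₀ hz₀ => by_contra fun hz₀Ω => ?_
  have hzero : ∀ x ∈ closure Ω, x ∉ Ω → φ x = 0 := fun x hx hxΩ =>
    hfr x ⟨hx, by rwa [hΩo.interior_eq]⟩
  obtain ⟨x, hx, hxmax⟩ := hK.exists_isMaxOn hΩconn.nonempty.closure hc
  -- a maximum point outside `Ω` has value `0 = φ z₀`, so then `z₀` is a maximum point as well
  obtain ⟨a, ha, hamax⟩ : ∃ a ∈ interior (closure Ω), IsMaxOn φ (closure Ω) a := by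
    by_cases hxΩ : x ∈ Ω
    · exact ⟨x, hΩD hxΩ, hxmax⟩
    · refine ⟨z₀, hz₀, isMaxOn_iff.mpr fun y hy => ?_⟩
      rw [hzero z₀ (interior_subset hz₀) hz₀Ω, ← hzero x hx hxΩ]
      exact isMaxOn_iff.mp hxmax y hy
  have hconst := hφ.eqOn_of_isMaxOn hK hc isOpen_interior
    (hΩconn.isPreconnected.subset_closure hΩD interior_subset) interior_subset
    (closure_mono hΩD) ha hamax
  exact hzw ((hconst hz).trans (hconst hw).symm)
end
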